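/- arXiv:1805.12588 — 2 statements merged into one kernel-verified Lean document; each statement's English description precedes it below -/
import Mathlib

section
/- Let l ≥ 5 be a prime and H = {σ_1, σ_{−1}} the order-2 subgroup of Δ_l. Then 1 ∈ π_H(𝒥_l); explicitly, π_H(l·θ_l − (l−1)·(2−σ_2)·θ_l) = 1, where both l·θ_l and (2−σ_2)·θ_l belong to 𝒥_l. Consequently π_H(𝒥_l) = ℤ[H]. -/
open scoped NumberField nonZeroDivisors
open NumberField

noncomputable section

/-- The Stickelberger element `θ_l ∈ ℚ[(ℤ/l)ˣ]`. -/
def stickElt (l : ℕ) [NeZero l] : MonoidAlgebra ℚ (ZMod l)ˣ :=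
  (l : ℚ)⁻¹ • ∑ a : (ZMod l)ˣ, MonoidAlgebra.single a⁻¹ (((a : ZMod l).val : ℚ))

/-- The canonical map `ℤ[(ℤ/l)ˣ] → ℚ[(ℤ/l)ˣ]`. -/
def zqMap (l : ℕ) : MonoidAlgebra ℤ (ZMod l)ˣ →ₐ[ℤ] MonoidAlgebra ℚ (ZMod l)ˣ :=
  MonoidAlgebra.lift ℤ _ (ZMod l)ˣ (MonoidAlgebra.of ℚ (ZMod l)ˣ)

/-- The Stickelberger ideal `𝒥_l = ℤ[Δ_l]·θ_l ∩ ℤ[Δ_l]`. -/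
def stickIdeal (l : ℕ) [NeZero l] : Set (MonoidAlgebra ℤ (ZMod l)ˣ) :=
  {x | ∃ y : MonoidAlgebra ℤ (ZMod l)ˣ, zqMap l y * stickElt l = zqMap l x}


/-- The coefficient-projection `π_H : ℤ[Δ_l] → ℤ[H]`, keeping only the coefficients of
elements of the subgroup `H`. -/
def piH (l : ℕ) [NeZero l] (H : Subgroup (ZMod l)ˣ) (x : MonoidAlgebra ℤ (ZMod l)ˣ) :
    MonoidAlgebra ℤ H :=
  letI : Fintype H := Fintype.ofFinite H
  ∑ h : H, MonoidAlgebra.single h (x.coeff ↑h)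

/-- `l·θ_l`, which has integer coefficients: `l·θ_l = ∑_a a·σ_a⁻¹`. -/
def lTheta (l : ℕ) [NeZero l] : MonoidAlgebra ℤ (ZMod l)ˣ :=
  ∑ a : (ZMod l)ˣ, MonoidAlgebra.single a⁻¹ (((a : ZMod l).val : ℤ))

/-!
The coefficient of `σ_a⁻¹` in `(2 - σ₂)·θ_l` is `2{a/l} - {2a/l}`, which is `1` if `2a > l`
and `0` otherwise; so `(2 - σ₂)·θ_l` is integral, just as `l·θ_l = ∑ a·σ_a⁻¹` is. At `σ_1` these
two elements have coefficients `1` and `0`, at `σ_{-1}` they have `l - 1` and `1`, hence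
`w = l·θ_l - (l - 1)(2 - σ₂)·θ_l ∈ 𝒥_l` satisfies `π_H(w) = 1`. As `π_H` is `ℤ[H]`-linear,
`π_H(z·w) = z` for every `z ∈ ℤ[H]`.
-/

namespace MonoidAlgebra

theorem coeff_sum_single_inv {R G : Type*} [Semiring R] [Group G] [Fintype G]
    (f : G → R) (g : G) :
    (∑ a : G, single a⁻¹ (f a)).coeff g = f g⁻¹ := by
  classical
  simp [Finsupp.single_apply, inv_eq_iff_eq_inv]

end MonoidAlgebra

open MonoidAlgebra

theorem zqMap_single (l : ℕ) (a : (ZMod l)ˣ) (c : ℤ) :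
    zqMap l (single a c) = single a (c : ℚ) := by
  simp [zqMap, MonoidAlgebra.lift_single, MonoidAlgebra.smul_single]

section Coefficients

variable (l : ℕ) [NeZero l]

theorem stickElt_coeff (g : (ZMod l)ˣ) :
    (stickElt l).coeff g = (l : ℚ)⁻¹ * ((g⁻¹ : (ZMod l)ˣ) : ZMod l).val := by
  rw [stickElt, coeff_smul_apply, coeff_sum_single_inv, smul_eq_mul]

theorem lTheta_coeff (g : (ZMod l)ˣ) :
    (lTheta l).coeff g = ((g⁻¹ : (ZMod l)ˣ) : ZMod l).val :=
  coeff_sum_single_inv _ g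

theorem zqMap_lTheta : zqMap l (lTheta l) = (l : ℚ) • stickElt l := by
  ext g
  rw [coeff_smul_apply, stickElt_coeff, smul_eq_mul, mul_inv_cancel_left₀ (NeZero.ne _)]
  simp only [lTheta, map_sum, zqMap_single, coeff_sum_single_inv, Int.cast_natCast]

def twoSubSigmaTwoTheta : MonoidAlgebra ℤ (ZMod l)ˣ :=
  ∑ a : (ZMod l)ˣ, single a⁻¹ (if l < 2 * (a : ZMod l).val then 1 else 0)

theorem twoSubSigmaTwoTheta_coeff (g : (ZMod l)ˣ) :
    (twoSubSigmaTwoTheta l).coeff g =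
      if l < 2 * ((g⁻¹ : (ZMod l)ˣ) : ZMod l).val then 1 else 0 :=
  coeff_sum_single_inv _ g

end Coefficients

theorem lTheta_coeff_one {l : ℕ} [NeZero l] (hl : 1 < l) : (lTheta l).coeff 1 = 1 := by
  have : Fact (1 < l) := ⟨hl⟩
  simp [lTheta_coeff, ZMod.val_one]

theorem lTheta_coeff_neg_one (l : ℕ) [NeZero l] : (lTheta l).coeff (-1) = l - 1 := by
  obtain ⟨m, rfl⟩ := Nat.exists_eq_succ_of_ne_zero (NeZero.ne l)
  simp [lTheta_coeff, ZMod.val_neg_one]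

theorem twoSubSigmaTwoTheta_coeff_one {l : ℕ} [NeZero l] (hl : 1 < l) :
    (twoSubSigmaTwoTheta l).coeff 1 = 0 := by
  have : Fact (1 < l) := ⟨hl⟩
  simp [twoSubSigmaTwoTheta_coeff, ZMod.val_one]
  omega

theorem twoSubSigmaTwoTheta_coeff_neg_one {l : ℕ} [NeZero l] (hl : 2 < l) :
    (twoSubSigmaTwoTheta l).coeff (-1) = 1 := by
  obtain ⟨m, rfl⟩ := Nat.exists_eq_succ_of_ne_zero (NeZero.ne l)
  simp [twoSubSigmaTwoTheta_coeff, ZMod.val_neg_one]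
  omega

theorem Nat.two_mul_mod_add_mul_ite {l v : ℕ} (hodd : Odd l) (hv : v < l) :
    2 * v % l + l * (if l < 2 * v then 1 else 0) = 2 * v := by
  obtain ⟨k, rfl⟩ := hodd
  split_ifs with h
  · rw [Nat.mod_eq_sub_mod h.le, Nat.mod_eq_of_lt (by omega)]
    omega
  · rw [Nat.mod_eq_of_lt (by omega)]
    omega

theorem zqMap_twoSubSigmaTwoTheta {l : ℕ} [NeZero l] (hl : 2 < l) (hodd : Odd l)
    (σ₂ : (ZMod l)ˣ) (hσ₂ : (σ₂ : ZMod l) = 2) :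
    zqMap l (twoSubSigmaTwoTheta l) = (single 1 2 - single σ₂ 1) * stickElt l := by
  ext g
  have hinv : (σ₂⁻¹ * g)⁻¹ = g⁻¹ * σ₂ := by group
  have hval : ((g⁻¹ * σ₂ : (ZMod l)ˣ) : ZMod l).val =
      2 * ((g⁻¹ : (ZMod l)ˣ) : ZMod l).val % l := by
    rw [Units.val_mul, hσ₂, ZMod.val_mul, mul_comm, ZMod.val_two_eq_two_mod, Nat.mod_eq_of_lt hl]
  have key := congrArg (Nat.cast (R := ℚ))
    (Nat.two_mul_mod_add_mul_ite hodd (ZMod.val_lt ((g⁻¹ : (ZMod l)ˣ) : ZMod l)))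
  push_cast [Nat.cast_ite] at key
  simp only [twoSubSigmaTwoTheta, map_sum, zqMap_single, coeff_sum_single_inv, sub_mul, coeff_sub,
    Finsupp.sub_apply, coeff_single_mul_apply, inv_one, one_mul, stickElt_coeff, hinv, hval,
    Int.cast_ite, Int.cast_one, Int.cast_zero]
  have hl0 : (l : ℚ) ≠ 0 := NeZero.ne _
  field_simp
  linear_combination key

def stickIdeal.toIdeal (l : ℕ) [NeZero l] : Ideal (MonoidAlgebra ℤ (ZMod l)ˣ) where
  carrier := stickIdeal l
  zero_mem' := ⟨0, by simp⟩
  add_mem' := by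
    rintro _ _ ⟨y₁, hy₁⟩ ⟨y₂, hy₂⟩
    exact ⟨y₁ + y₂, by rw [map_add, map_add, add_mul, hy₁, hy₂]⟩
  smul_mem' := by
    rintro u _ ⟨y, hy⟩
    exact ⟨u * y, by rw [smul_eq_mul, map_mul, map_mul, mul_assoc, hy]⟩

theorem stickIdeal.mem_toIdeal {l : ℕ} [NeZero l] {x : MonoidAlgebra ℤ (ZMod l)ˣ} :
    x ∈ stickIdeal.toIdeal l ↔ x ∈ stickIdeal l :=
  Iff.rfl

theorem lTheta_mem_stickIdeal (l : ℕ) [NeZero l] : lTheta l ∈ stickIdeal l :=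
  ⟨l, by rw [map_natCast, ← nsmul_eq_mul, zqMap_lTheta, Nat.cast_smul_eq_nsmul]⟩

theorem twoSubSigmaTwoTheta_mem_stickIdeal {l : ℕ} [NeZero l] (hl : 2 < l) (hodd : Odd l)
    (σ₂ : (ZMod l)ˣ) (hσ₂ : (σ₂ : ZMod l) = 2) : twoSubSigmaTwoTheta l ∈ stickIdeal l :=
  ⟨single 1 2 - single σ₂ 1, by
    rw [zqMap_twoSubSigmaTwoTheta hl hodd σ₂ hσ₂, map_sub, zqMap_single, zqMap_single]; norm_num⟩

section Projection

variable {l : ℕ} [NeZero l] {H : Subgroup (ZMod l)ˣ}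

theorem piH_add (x y : MonoidAlgebra ℤ (ZMod l)ˣ) : piH l H (x + y) = piH l H x + piH l H y := by
  simp only [piH, coeff_add, Finsupp.add_apply, single_add, Finset.sum_add_distrib]

theorem piH_single_mul (h : H) (c : ℤ) (x : MonoidAlgebra ℤ (ZMod l)ˣ) :
    piH l H (single (h : (ZMod l)ˣ) c * x) = single h c * piH l H x := by
  rw [piH, piH, Finset.mul_sum]
  refine Finset.sum_equiv (Equiv.mulLeft h⁻¹) (by simp) fun k _ => ?_
  simp [coeff_single_mul_apply, single_mul_single]

theorem piH_eq_one {x : MonoidAlgebra ℤ (ZMod l)ˣ} (h1 : x.coeff 1 = 1)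
    (h0 : ∀ h ∈ H, h ≠ 1 → x.coeff h = 0) : piH l H x = 1 := by
  rw [piH, Finset.sum_eq_single 1 (fun h _ hne => ?_) (by simp), OneMemClass.coe_one, h1, one_def]
  rw [h0 h h.2 (by exact_mod_cast hne), single_zero]

theorem exists_mem_piH_eq_of_piH_eq_one {I : Ideal (MonoidAlgebra ℤ (ZMod l)ˣ)}
    {w : MonoidAlgebra ℤ (ZMod l)ˣ} (hwI : w ∈ I) (hw : piH l H w = 1) (z : MonoidAlgebra ℤ H) :
    ∃ x ∈ I, piH l H x = z := by
  induction z using MonoidAlgebra.induction with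
  | zero => exact ⟨0, I.zero_mem, by simp [piH]⟩
  | single_add h c f _ _ ih =>
    obtain ⟨x, hxI, hx⟩ := ih
    refine ⟨single (h : (ZMod l)ˣ) c * w + x, I.add_mem (I.mul_mem_left _ hwI) hxI, ?_⟩
    rw [piH_add, piH_single_mul, hw, mul_one, hx]

end Projection

theorem eq_one_or_eq_neg_one_of_mem_zpowers_neg_one {G : Type*} [Group G] [HasDistribNeg G]
    {g : G} (hg : g ∈ Subgroup.zpowers (-1)) : g = 1 ∨ g = -1 := by
  obtain ⟨k, rfl⟩ := Subgroup.mem_zpowers_iff.mp hg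
  rw [neg_one_zpow_eq_ite]
  split_ifs <;> simp

/-- Let `l ≥ 5` be a prime and `H = {σ_1, σ_{-1}}` the order-2 subgroup
of `Δ_l`.  Then `1 ∈ π_H(𝒥_l)`: explicitly, both `l·θ_l` and `(2 - σ_2)·θ_l` lie in
`𝒥_l`, and `π_H(l·θ_l - (l-1)·(2-σ_2)·θ_l) = 1`.  Consequently `π_H(𝒥_l) = ℤ[H]`. -/
theorem stmt11 (l : ℕ) [Fact (Nat.Prime l)] [NeZero l] (hl : 5 ≤ l)
    (σ₂ : (ZMod l)ˣ) (hσ₂ : (σ₂ : ZMod l) = 2) :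
    lTheta l ∈ stickIdeal l ∧
    ∃ t : MonoidAlgebra ℤ (ZMod l)ˣ, t ∈ stickIdeal l ∧
      zqMap l t = (MonoidAlgebra.single 1 2 - MonoidAlgebra.single σ₂ 1) * stickElt l ∧
      piH l (Subgroup.zpowers (-1 : (ZMod l)ˣ)) (lTheta l - ((l : ℤ) - 1) • t) = 1 ∧
      ∀ z : MonoidAlgebra ℤ (Subgroup.zpowers (-1 : (ZMod l)ˣ)),
        ∃ x ∈ stickIdeal l, piH l (Subgroup.zpowers (-1 : (ZMod l)ˣ)) x = z := by
  have hodd : Odd l := (Fact.out : l.Prime).odd_of_ne_two (by omega)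
  have hθ := stickIdeal.mem_toIdeal.mpr (lTheta_mem_stickIdeal l)
  have htI := stickIdeal.mem_toIdeal.mpr (twoSubSigmaTwoTheta_mem_stickIdeal (by omega) hodd σ₂ hσ₂)
  have hw : piH l (Subgroup.zpowers (-1))
      (lTheta l - ((l : ℤ) - 1) • twoSubSigmaTwoTheta l) = 1 := by
    refine piH_eq_one ?_ fun h hh hne => ?_
    · rw [coeff_sub, Finsupp.sub_apply, coeff_smul_apply, lTheta_coeff_one (by omega),
        twoSubSigmaTwoTheta_coeff_one (by omega), smul_zero, sub_zero]
    · obtain rfl := (eq_one_or_eq_neg_one_of_mem_zpowers_neg_one hh).resolve_left hne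
      rw [coeff_sub, Finsupp.sub_apply, coeff_smul_apply, lTheta_coeff_neg_one l,
        twoSubSigmaTwoTheta_coeff_neg_one (by omega), smul_eq_mul, mul_one, sub_self]
  exact ⟨hθ, _, htI, zqMap_twoSubSigmaTwoTheta (by omega) hodd σ₂ hσ₂, hw,
    exists_mem_piH_eq_of_piH_eq_one (sub_mem hθ (zsmul_mem htI _)) hw⟩
end
end

section
/- Let l be an odd prime and H any subgroup of Δ_l. Then π_H(𝒥_l), the image of the Stickelberger ideal under the coefficient-projection π_H, is an ideal of the group ring ℤ[H] (even though π_H itself is not a ring homomorphism). -/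
open scoped NumberField nonZeroDivisors
open NumberField

noncomputable section

/-!
`π_H` is the pullback of coefficients along `H ↪ Δ_l`, so it is additive and commutes with left
multiplication by elements of `H`, because `(h·x)(h') = x(h⁻¹h')` and `h⁻¹h' ∈ H`. Hence it maps
the ideal `𝒥_l` of `ℤ[Δ_l]` onto an additive subgroup of `ℤ[H]` that is stable under
multiplication by the basis elements `h`, i.e. onto an ideal of `ℤ[H]`.
-/

namespace MonoidAlgebra

variable {k G : Type*} [Semiring k]

section Monoid

variable [Monoid G]

def idealOfSingleMulMem (S : AddSubmonoid (MonoidAlgebra k G))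
    (hS : ∀ (g : G) (c : k), ∀ x ∈ S, single g c * x ∈ S) : Ideal (MonoidAlgebra k G) where
  toAddSubmonoid := S
  smul_mem' c x hx := by
    induction c using induction_linear with
    | zero => rw [zero_smul]; exact S.zero_mem
    | add a b ha hb => rw [add_smul]; exact S.add_mem ha hb
    | single g c => exact hS g c x hx

@[simp]
theorem coe_idealOfSingleMulMem (S : AddSubmonoid (MonoidAlgebra k G)) (hS) :
    (idealOfSingleMulMem S hS : Set (MonoidAlgebra k G)) = S :=
  rfl

end Monoid

section Group

variable [Group G]

theorem comapDomain_subtype_single_mul (H : Subgroup G) (h : H) (c : k)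
    (x : MonoidAlgebra k G) :
    comapDomain Subtype.val Subtype.val_injective (single (h : G) c * x) =
      single h c * comapDomain Subtype.val Subtype.val_injective x := by
  ext h'
  simp [coeff_single_mul_apply]

end Group

end MonoidAlgebra

open MonoidAlgebra

theorem piH_eq_comapDomain (l : ℕ) [NeZero l] (H : Subgroup (ZMod l)ˣ)
    (x : MonoidAlgebra ℤ (ZMod l)ˣ) :
    piH l H x = comapDomain Subtype.val Subtype.val_injective x := by
  ext h
  simp [piH, coeff_sum, Finsupp.finsetSum_apply, coeff_single, Finsupp.single_apply]

def stickIdealIdeal (l : ℕ) [NeZero l] : Ideal (MonoidAlgebra ℤ (ZMod l)ˣ) where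
  carrier := stickIdeal l
  zero_mem' := ⟨0, by simp⟩
  add_mem' := by
    rintro x x' ⟨y, hy⟩ ⟨y', hy'⟩
    exact ⟨y + y', by rw [map_add, map_add, add_mul, hy, hy']⟩
  smul_mem' := by
    rintro z x ⟨y, hy⟩
    exact ⟨z * y, by rw [smul_eq_mul, map_mul, map_mul, mul_assoc, hy]⟩

theorem stmt18_general (l : ℕ) [NeZero l] (H : Subgroup (ZMod l)ˣ) :
    ∃ I : Ideal (MonoidAlgebra ℤ H), (I : Set (MonoidAlgebra ℤ H)) = piH l H '' stickIdeal l := by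
  let π : MonoidAlgebra ℤ (ZMod l)ˣ →+ MonoidAlgebra ℤ H :=
    comapDomainAddMonoidHom Subtype.val Subtype.val_injective
  have hπ : π = piH l H := funext fun x => (piH_eq_comapDomain l H x).symm
  refine ⟨idealOfSingleMulMem ((stickIdealIdeal l).toAddSubmonoid.map π) ?_, ?_⟩
  · rintro h c _ ⟨x, hx, rfl⟩
    exact ⟨single (h : (ZMod l)ˣ) c * x, (stickIdealIdeal l).mul_mem_left _ hx,
      comapDomain_subtype_single_mul H h c x⟩
  · rw [coe_idealOfSingleMulMem, AddSubmonoid.coe_map, ← hπ]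
    rfl

/-- For an odd prime `l` and any subgroup `H` of `Δ_l`, the image
`π_H(𝒥_l)` of the Stickelberger ideal under the coefficient projection `π_H` is an
ideal of the group ring `ℤ[H]`. -/
theorem stmt18 (l : ℕ) [Fact (Nat.Prime l)] [NeZero l] (hl : Odd l)
    (H : Subgroup (ZMod l)ˣ) :
    ∃ I : Ideal (MonoidAlgebra ℤ H), (I : Set (MonoidAlgebra ℤ H)) = piH l H '' stickIdeal l :=
  stmt18_general l H

end
end
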